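/- arXiv:2412.02522 — 5 statements merged into one kernel-verified Lean document; each statement's English description precedes it below -/
import Mathlib

section
/- Let ℓ ≥ 3 be prime and q a prime power with gcd(q, ℓ) = 1. If q ≢ 1 (mod ℓ), then the number of projective points on the curve y^ℓ = x(x^ℓ - 1) over 𝔽_q is q + 1. -/
theorem stmt_0 (ℓ : ℕ) (hℓ : ℓ.Prime) (h3 : 3 ≤ ℓ)
    (F : Type*) [Field F] [Fintype F] [DecidableEq F]
    (hcop : Nat.Coprime (Fintype.card F) ℓ)
    (hmod : Fintype.card F % ℓ ≠ 1) :
    Fintype.card {p : F × F // p.2 ^ ℓ = p.1 * (p.1 ^ ℓ - 1)} + 1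
      = Fintype.card F + 1 := by
  have hℓ0 : ℓ ≠ 0 := by omega
  -- ℓ does not divide q - 1
  have hndvd : ¬ (ℓ ∣ Fintype.card F - 1) := by
    intro hdvd
    have h2 : 2 ≤ Fintype.card F := Fintype.one_lt_card
    apply hmod
    obtain ⟨k, hk⟩ := hdvd
    have : Fintype.card F = ℓ * k + 1 := by omega
    rw [this, Nat.mul_add_mod]
    exact Nat.mod_eq_of_lt (by omega)
  -- y ↦ y^ℓ is injective, hence bijective
  have hinj : Function.Injective (fun y : F => y ^ ℓ) := by
    intro a b hab
    simp only at hab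
    rcases eq_or_ne b 0 with hb | hb
    · subst hb
      simpa [pow_eq_zero_iff hℓ0, zero_pow hℓ0] using hab
    · have ha : a ≠ 0 := by
        intro h; subst h
        exact hb (by simpa [pow_eq_zero_iff hℓ0, zero_pow hℓ0, eq_comm] using hab)
      set u : Fˣ := Units.mk0 (a / b) (div_ne_zero ha hb) with hu
      have hu1 : u ^ ℓ = 1 := by
        ext
        rw [hu]
        simp only [Units.val_pow_eq_pow_val, Units.val_mk0, Units.val_one, div_pow, hab]
        exact div_self (pow_ne_zero _ hb)
      have h1 : orderOf u ∣ ℓ := orderOf_dvd_of_pow_eq_one hu1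
      have h2 : orderOf u ∣ Fintype.card F - 1 := by
        have := orderOf_dvd_card (x := u)
        rwa [Fintype.card_units] at this
      have : orderOf u = 1 := by
        rcases (Nat.Prime.eq_one_or_self_of_dvd hℓ _ h1) with h | h
        · exact h
        · exact absurd (h ▸ h2) hndvd
      have : u = 1 := orderOf_eq_one_iff.mp this
      have : a / b = 1 := by
        have := congrArg Units.val this
        simpa [hu] using this
      field_simp at this
      exact this
  have hbij : Function.Bijective (fun y : F => y ^ ℓ) :=
    (Finite.injective_iff_bijective).mp hinj
  set e : F ≃ F := Equiv.ofBijective _ hbij with he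
  have heval : ∀ y : F, e y = y ^ ℓ := fun y => rfl
  have key : Fintype.card {p : F × F // p.2 ^ ℓ = p.1 * (p.1 ^ ℓ - 1)} = Fintype.card F := by
    apply Fintype.card_congr
    refine
      { toFun := fun p => p.1.1
        invFun := fun x => ⟨(x, e.symm (x * (x ^ ℓ - 1))), by
          have := e.apply_symm_apply (x * (x ^ ℓ - 1))
          rw [heval] at this
          simpa using this⟩
        left_inv := fun p => ?_
        right_inv := fun x => rfl }
    apply Subtype.ext
    apply Prod.ext
    · rfl
    · show e.symm (p.1.1 * (p.1.1 ^ ℓ - 1)) = p.1.2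
      rw [Equiv.symm_apply_eq, heval]
      exact p.2.symm
  rw [key]
end

section
/- Let ℓ ≥ 3 be prime and q a prime power with q ≡ 1 (mod ℓ) but q ≢ 1 (mod ℓ²). Then the number of affine solutions (x,y) ∈ 𝔽_q² of y^ℓ = x(x^ℓ - 1) equals q, hence the projective curve has q + 1 points over 𝔽_q. -/
/-!
Put `f x = x * (x ^ ℓ - 1)` and let `μ` be the `ℓ`-th roots of unity in `F`. For `η ∈ μ` we have
`f (η x) = η f x`, and `x ↦ η x` permutes `F`, so `#μ` times the number of points equals
`∑ x, ∑ η ∈ μ, #{y | y ^ ℓ = η f x}`. When `q - 1 = ℓ m` with `ℓ` and `m` coprime, for each `c ≠ 0`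
exactly one of the `η c` is an `ℓ`-th power: Bézout for `ℓ` and `m` produces one, and the quotient
of two would be an `ℓ`-th root of unity that is also an `ℓ`-th power, hence of order dividing
both `ℓ` and `m`. So every inner sum equals `#μ`, and there are `q` points.
-/

open Finset

theorem exists_pow_eq_one_and_pow_eq_mul_of_coprime {G : Type*} [Group G] {ℓ m : ℕ}
    (hcop : ℓ.Coprime m) {g : G} (hg : g ^ (ℓ * m) = 1) :
    ∃ η : G, η ^ ℓ = 1 ∧ ∃ w : G, w ^ ℓ = η * g := by
  have hbezout : (1 : ℤ) = ℓ * ℓ.gcdA m + m * ℓ.gcdB m := by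
    rw [← Nat.gcd_eq_gcd_ab, hcop, Nat.cast_one]
  refine ⟨g ^ (-(m * ℓ.gcdB m)), ?_, g ^ ℓ.gcdA m, ?_⟩
  · rw [← zpow_natCast, ← zpow_mul, show -(m * ℓ.gcdB m) * ℓ = ((ℓ * m : ℕ) : ℤ) * -ℓ.gcdB m by
      push_cast; ring, zpow_mul, zpow_natCast, hg, one_zpow]
  · rw [← zpow_natCast, ← zpow_mul, ← zpow_add_one, mul_comm (ℓ.gcdA m : ℤ)]
    congr 1
    linarith

theorem mul_mul_pow_sub_one_of_pow_eq_one {R : Type*} [CommRing R] {ℓ : ℕ} {a : R}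
    (ha : a ^ ℓ = 1) (x : R) : a * x * ((a * x) ^ ℓ - 1) = a * (x * (x ^ ℓ - 1)) := by
  rw [mul_pow, ha, one_mul]; ring

theorem card_subtype_prod_eq_sum_card {α β : Type*} [Fintype α] [Fintype β]
    (P : α → β → Prop) [∀ a b, Decidable (P a b)] [Fintype {p : α × β // P p.1 p.2}] :
    Fintype.card {p : α × β // P p.1 p.2} = ∑ a, #{b | P a b} := by
  rw [Fintype.card_subtype, card_filter, Fintype.sum_prod_type]
  simp only [card_filter]

theorem ne_zero_of_pow_eq_rootOfUnity_mul {G₀ : Type*} [GroupWithZero G₀] {ℓ : ℕ} (hℓ : ℓ ≠ 0)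
    {c η w : G₀} (hc : c ≠ 0) (hη : η ^ ℓ = 1) (hw : w ^ ℓ = η * c) : w ≠ 0 := by
  rintro rfl
  obtain rfl : η = 0 := by simpa [hℓ, hc, eq_comm] using hw
  simp [hℓ] at hη

theorem card_pow_eq_pow {F : Type*} [Field F] [Fintype F] [DecidableEq F] {ℓ : ℕ} {w : F}
    (hw : w ≠ 0) : #{y | y ^ ℓ = w ^ ℓ} = #{η : F | η ^ ℓ = 1} := by
  refine card_nbij' (· / w) (· * w) ?_ ?_ ?_ ?_
  · intro y hy
    simp only [coe_filter, mem_univ, true_and, Set.mem_ofPred_eq] at hy ⊢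
    rw [div_pow, hy, div_self (pow_ne_zero _ hw)]
  · intro η hη
    simp only [coe_filter, mem_univ, true_and, Set.mem_ofPred_eq] at hη ⊢
    rw [mul_pow, hη, one_mul]
  · intro y _; exact div_mul_cancel₀ y hw
  · intro η _; exact mul_div_cancel_right₀ η hw

section FiniteField

variable {F : Type*} [Field F] [Fintype F] {ℓ m : ℕ}

theorem ne_zero_of_card_sub_one_eq_mul (hq : Fintype.card F - 1 = ℓ * m) : ℓ ≠ 0 := by
  rintro rfl
  have := Fintype.one_lt_card (α := F)
  omega

theorem exists_pow_eq_one_and_pow_eq_mul (hq : Fintype.card F - 1 = ℓ * m)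
    (hcop : ℓ.Coprime m) {c : F} (hc : c ≠ 0) :
    ∃ η : F, η ^ ℓ = 1 ∧ ∃ w : F, w ^ ℓ = η * c := by
  have hcu : (Units.mk0 c hc) ^ (ℓ * m) = 1 := by
    ext
    rw [Units.val_pow_eq_pow_val, Units.val_mk0, ← hq, FiniteField.pow_card_sub_one_eq_one c hc,
      Units.val_one]
  obtain ⟨η, hη, w, hw⟩ := exists_pow_eq_one_and_pow_eq_mul_of_coprime hcop hcu
  exact ⟨η, by simpa using congrArg Units.val hη, w, by simpa using congrArg Units.val hw⟩

theorem eq_of_pow_eq_mul_of_pow_eq_mul (hq : Fintype.card F - 1 = ℓ * m) (hcop : ℓ.Coprime m)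
    {c η₁ η₂ w₁ w₂ : F} (hc : c ≠ 0) (hη₁ : η₁ ^ ℓ = 1) (hη₂ : η₂ ^ ℓ = 1)
    (hw₁ : w₁ ^ ℓ = η₁ * c) (hw₂ : w₂ ^ ℓ = η₂ * c) : η₁ = η₂ := by
  have hℓ := ne_zero_of_card_sub_one_eq_mul hq
  have hη₂0 : η₂ ≠ 0 := by rintro rfl; simp [hℓ] at hη₂
  have hquot : (w₁ / w₂) ^ ℓ = η₁ / η₂ := by
    rw [div_pow, hw₁, hw₂, mul_div_mul_right _ _ hc]
  have hone : η₁ / η₂ = 1 := by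
    refine (pow_eq_one_iff_of_coprime hcop).mp ⟨by rw [div_pow, hη₁, hη₂, div_one], ?_⟩
    rw [← hquot, ← pow_mul, ← hq, FiniteField.pow_card_sub_one_eq_one _
      (div_ne_zero (ne_zero_of_pow_eq_rootOfUnity_mul hℓ hc hη₁ hw₁)
        (ne_zero_of_pow_eq_rootOfUnity_mul hℓ hc hη₂ hw₂))]
  exact (div_eq_one_iff_eq hη₂0).mp hone

variable [DecidableEq F]

theorem sum_card_pow_eq_rootOfUnity_mul (hq : Fintype.card F - 1 = ℓ * m)
    (hcop : ℓ.Coprime m) (c : F) :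
    ∑ η ∈ {η : F | η ^ ℓ = 1}, #{y | y ^ ℓ = η * c} = #{η : F | η ^ ℓ = 1} := by
  have hℓ := ne_zero_of_card_sub_one_eq_mul hq
  rcases eq_or_ne c 0 with rfl | hc
  · have hzero : #{y : F | y ^ ℓ = 0} = 1 := by
      rw [card_eq_one]; exact ⟨0, by ext; simp [hℓ]⟩
    simp only [mul_zero, hzero, sum_const, smul_eq_mul, mul_one]
  obtain ⟨η₀, hη₀, w, hw⟩ := exists_pow_eq_one_and_pow_eq_mul hq hcop hc
  rw [sum_eq_single_of_mem η₀ (by simpa using hη₀), ← hw,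
    card_pow_eq_pow (ne_zero_of_pow_eq_rootOfUnity_mul hℓ hc hη₀ hw)]
  intro η hη hne
  rw [card_eq_zero, filter_eq_empty_iff]
  intro y _ hy
  exact hne (eq_of_pow_eq_mul_of_pow_eq_mul hq hcop hc (by simpa using hη) hη₀ hy hw)

theorem card_pow_eq_mul_pow_sub_one (hq : Fintype.card F - 1 = ℓ * m) (hcop : ℓ.Coprime m) :
    Fintype.card {p : F × F // p.2 ^ ℓ = p.1 * (p.1 ^ ℓ - 1)} = Fintype.card F := by
  set μ : Finset F := {η | η ^ ℓ = 1}
  have hμ : 0 < #μ := card_pos.mpr ⟨1, by simp [μ]⟩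
  refine Nat.eq_of_mul_eq_mul_right hμ ?_
  calc Fintype.card {p : F × F // p.2 ^ ℓ = p.1 * (p.1 ^ ℓ - 1)} * #μ
      = ∑ η ∈ μ, ∑ x : F, #{y | y ^ ℓ = x * (x ^ ℓ - 1)} := by
        rw [card_subtype_prod_eq_sum_card fun x y => y ^ ℓ = x * (x ^ ℓ - 1), sum_const,
          smul_eq_mul, mul_comm]
    _ = ∑ η ∈ μ, ∑ x : F, #{y | y ^ ℓ = η * x * ((η * x) ^ ℓ - 1)} := by
        refine sum_congr rfl fun η hη => ?_
        have hη0 : η ≠ 0 := by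
          rintro rfl; simp [μ, ne_zero_of_card_sub_one_eq_mul hq] at hη
        exact (Equiv.sum_comp (Equiv.mulLeft₀ η hη0) fun x => #{y | y ^ ℓ = x * (x ^ ℓ - 1)}).symm
    _ = ∑ x : F, ∑ η ∈ μ, #{y | y ^ ℓ = η * (x * (x ^ ℓ - 1))} := by
        rw [sum_comm]
        refine sum_congr rfl fun x _ => sum_congr rfl fun η hη => ?_
        rw [mul_mul_pow_sub_one_of_pow_eq_one (by simpa [μ] using hη)]
    _ = Fintype.card F * #μ := by
        simp only [μ, sum_card_pow_eq_rootOfUnity_mul hq hcop, sum_const, card_univ, smul_eq_mul]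

end FiniteField

theorem stmt_2_general (ℓ : ℕ) (hℓ : ℓ.Prime)
    (F : Type*) [Field F] [Fintype F] [DecidableEq F]
    (hmod1 : Fintype.card F % ℓ = 1)
    (hmod2 : Fintype.card F % ℓ ^ 2 ≠ 1) :
    Fintype.card {p : F × F // p.2 ^ ℓ = p.1 * (p.1 ^ ℓ - 1)} = Fintype.card F ∧
    Fintype.card {p : F × F // p.2 ^ ℓ = p.1 * (p.1 ^ ℓ - 1)} + 1 = Fintype.card F + 1 := by
  have hq1 : 1 ≤ Fintype.card F := Fintype.card_pos
  obtain ⟨m, hm⟩ : ℓ ∣ Fintype.card F - 1 :=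
    (Nat.modEq_iff_dvd' hq1).mp (by rw [Nat.ModEq, hmod1, Nat.one_mod_eq_one.mpr hℓ.ne_one])
  have hcop : ℓ.Coprime m := by
    refine (Nat.Prime.coprime_iff_not_dvd hℓ).mpr fun ⟨k, hk⟩ => hmod2 ?_
    have hsq : ℓ ^ 2 ≠ 1 := (Nat.one_lt_pow two_ne_zero hℓ.one_lt).ne'
    have hcong : Fintype.card F ≡ 1 [MOD ℓ ^ 2] :=
      ((Nat.modEq_iff_dvd' hq1).mpr ⟨k, by rw [hm, hk]; ring⟩).symm
    rwa [Nat.ModEq, Nat.one_mod_eq_one.mpr hsq] at hcong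
  have hcard := card_pow_eq_mul_pow_sub_one hm hcop
  exact ⟨hcard, by rw [hcard]⟩

theorem stmt_2 (ℓ : ℕ) (hℓ : ℓ.Prime) (h3 : 3 ≤ ℓ)
    (F : Type*) [Field F] [Fintype F] [DecidableEq F]
    (hmod1 : Fintype.card F % ℓ = 1)
    (hmod2 : Fintype.card F % ℓ ^ 2 ≠ 1) :
    Fintype.card {p : F × F // p.2 ^ ℓ = p.1 * (p.1 ^ ℓ - 1)} = Fintype.card F ∧
    Fintype.card {p : F × F // p.2 ^ ℓ = p.1 * (p.1 ^ ℓ - 1)} + 1 = Fintype.card F + 1 :=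
  stmt_2_general ℓ hℓ F hmod1 hmod2
end

section
/- Let χ be a nontrivial multiplicative character of 𝔽_q^* of order ℓ, extended by χ(0) = 0, and suppose ℓ divides q - 1 but ℓ² does not. Then the sum over c ∈ 𝔽_q of χ^j(c(c^ℓ - 1)) equals 0 for every 1 ≤ j ≤ ℓ - 1. -/
theorem stmt_4 (ℓ : ℕ) (hℓ : ℓ.Prime)
    (F : Type*) [Field F] [Fintype F]
    (hdvd : ℓ ∣ Fintype.card F - 1) (hndvd : ¬ ℓ ^ 2 ∣ Fintype.card F - 1)
    (χ : MulChar F ℂ) (hχ : orderOf χ = ℓ) :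
    ∀ j : ℕ, 1 ≤ j → j ≤ ℓ - 1 →
      ∑ c : F, (χ ^ j) (c * (c ^ ℓ - 1)) = 0 := by
  intro j hj1 hj2
  classical
  have hjne : j ≠ 0 := by omega
  set n := Fintype.card F - 1 with hn
  have hℓpos : 0 < ℓ := hℓ.pos
  have hnpos : 0 < n := by
    have := Fintype.one_lt_card (α := F)
    omega
  obtain ⟨γ, hγ⟩ := IsCyclic.exists_generator (α := Fˣ)
  have horder : orderOf γ = n := by
    rw [orderOf_eq_card_of_forall_mem_zpowers hγ]
    rw [Nat.card_eq_fintype_card, Fintype.card_units]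
  -- evaluation at γ is an injective monoid hom
  have heval_inj : ∀ ψ₁ ψ₂ : MulChar F ℂ, ψ₁ (γ : F) = ψ₂ (γ : F) → ψ₁ = ψ₂ := by
    intro ψ₁ ψ₂ h
    apply MulChar.ext
    intro a
    obtain ⟨k, hk⟩ : a ∈ Submonoid.powers γ := by
      rw [mem_powers_iff_mem_zpowers]; exact hγ a
    rw [← hk]
    push_cast
    rw [map_pow, map_pow, h]
  -- order of χ γ equals ℓ
  have hχγ : orderOf (χ (γ : F)) = ℓ := by
    rw [← hχ]
    apply dvd_antisymm
    · rw [orderOf_dvd_iff_pow_eq_one, ← MulChar.pow_apply_coe, pow_orderOf_eq_one,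
        MulChar.one_apply_coe]
    · rw [orderOf_dvd_iff_pow_eq_one]
      apply heval_inj
      rw [MulChar.pow_apply_coe, pow_orderOf_eq_one, MulChar.one_apply_coe]
  set g : Fˣ := γ ^ (n / ℓ) with hg
  have hgℓ : g ^ ℓ = 1 := by
    rw [hg, ← pow_mul, Nat.div_mul_cancel hdvd, ← horder, pow_orderOf_eq_one]
  have hnotdvd : ¬ ℓ ∣ n / ℓ := by
    intro h
    exact hndvd (by rw [pow_two]; exact (Nat.dvd_div_iff_mul_dvd hdvd).mp h)
  -- χ g has order ℓ
  have hχg : orderOf (χ (g : F)) = ℓ := by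
    have : (χ (g : F)) = χ (γ : F) ^ (n / ℓ) := by
      rw [hg]; push_cast; rw [map_pow]
    have hdivne : n / ℓ ≠ 0 := by
      have := Nat.div_pos (Nat.le_of_dvd hnpos hdvd) hℓpos; omega
    rw [this, orderOf_pow' _ hdivne, hχγ, Nat.Coprime.gcd_eq_one, Nat.div_one]
    exact hℓ.coprime_iff_not_dvd.mpr hnotdvd
  have hne1 : χ (g : F) ^ j ≠ 1 := by
    intro h
    have := orderOf_dvd_of_pow_eq_one h
    rw [hχg] at this
    have := Nat.le_of_dvd (by omega) this
    omega
  have hg0 : (g : F) ≠ 0 := Units.ne_zero g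
  have hgF : (g : F) ^ ℓ = 1 := by
    rw [← Units.val_pow_eq_pow_val, hgℓ, Units.val_one]
  -- key identity by substitution c ↦ g * c
  have key : ∑ c : F, (χ ^ j) (c * (c ^ ℓ - 1))
      = χ (g : F) ^ j * ∑ c : F, (χ ^ j) (c * (c ^ ℓ - 1)) := by
    rw [Finset.mul_sum]
    apply Fintype.sum_equiv (Equiv.mulLeft₀ (g : F) hg0).symm
    intro c
    have hc : ((Equiv.mulLeft₀ (g : F) hg0).symm c) = (g : F)⁻¹ * c := rfl
    calc (χ ^ j) (c * (c ^ ℓ - 1))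
        = (χ ^ j) ((g : F) * (((g:F)⁻¹ * c) * (((g:F)⁻¹ * c) ^ ℓ - 1))) := by
          congr 1
          have h1 : ((g : F)⁻¹ * c) ^ ℓ = c ^ ℓ := by
            rw [mul_pow, inv_pow, hgF, inv_one, one_mul]
          rw [h1, ← mul_assoc, mul_inv_cancel_left₀ hg0]
      _ = χ (g : F) ^ j * (χ ^ j) (((g:F)⁻¹ * c) * (((g:F)⁻¹ * c) ^ ℓ - 1)) := by
          rw [map_mul, MulChar.pow_apply' χ hjne]
      _ = χ (g : F) ^ j * (χ ^ j) ((Equiv.mulLeft₀ (g : F) hg0).symm c *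
            (((Equiv.mulLeft₀ (g : F) hg0).symm c) ^ ℓ - 1)) := by rw [hc]
  have : (1 - χ (g : F) ^ j) * ∑ c : F, (χ ^ j) (c * (c ^ ℓ - 1)) = 0 := by
    rw [sub_mul, one_mul, ← key, sub_self]
  rcases mul_eq_zero.mp this with h | h
  · exact absurd (by linear_combination -h) hne1
  · exact h
end

section
/- Let ℓ be prime, q ≡ 1 (mod ℓ²), and χ the multiplicative character of 𝔽_q^* of order ℓ² determined by χ(x) ≡ x^{(q-1)/ℓ²} (mod q). Then the number of projective points on C_ℓ: y^ℓ = x(x^ℓ - 1) over 𝔽_q equals q + 1 + Σ_{a ∈ (ℤ/ℓ²ℤ)^*} J_q(aℓ(ℓ-1), a), where J_q(a, b) = Σ_{x ∈ 𝔽_q} χ^a(x) χ^b(1-x) is the Jacobi sum. -/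
/-!
Fibre the affine curve over `x` and let `ψ = χ ^ ℓ`, of order `ℓ`. The number of `y` with
`y ^ ℓ = u` is `[u = 0] + ∑_{j < ℓ} ψ^j(u)`; the `j = 0` terms and the `[u = 0]` terms add up
to `q`. For `0 < j < ℓ`, `ψ^j(x (x^ℓ - 1)) = χ^j(x^ℓ) ψ^j(x^ℓ - 1)` depends only on `t = x^ℓ`,
and counting `ℓ`-th roots once more gives `∑_m ∑_t χ^(j + ℓm)(t) χ^(ℓ(j + ℓm))(t - 1)`, where
`k = j + ℓm` runs exactly once through the units of `ℤ/ℓ²`. The substitution `t ↦ t⁻¹` turns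
`∑_t χ^k(t) χ^(ℓk)(t - 1)` into `J(χ^(-(1+ℓ)k), χ^(ℓk))`, and with `k = (ℓ - 1) a` this is
`J(χ^a, χ^(-ℓa)) = J(χ^(-ℓa), χ^a)`.
-/

open Finset

section Reindexing

variable {M : Type*} [AddCommMonoid M]

theorem Finset.sum_range_mul_eq_sum_sum (f : ℕ → M) (m n : ℕ) :
    ∑ k ∈ range (m * n), f k = ∑ j ∈ range n, ∑ i ∈ range m, f (j + n * i) := by
  rw [← Fin.sum_univ_eq_sum_range, ← finProdFinEquiv.sum_comp, Fintype.sum_prod_type, sum_comm,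
    ← Fin.sum_univ_eq_sum_range (fun j => ∑ i ∈ range m, f (j + n * i))]
  refine sum_congr rfl fun j _ => ?_
  rw [← Fin.sum_univ_eq_sum_range (fun i => f (j + n * i))]
  rfl

theorem ZMod.sum_units_eq_sum_coprime {n : ℕ} [NeZero n] (f : ℕ → M) :
    ∑ b : (ZMod n)ˣ, f (b : ZMod n).val = ∑ k ∈ range n with k.Coprime n, f k := by
  refine sum_bij (fun b _ => (b : ZMod n).val) (fun b _ => ?_) (fun a _ b _ h => ?_)
    (fun k hk => ?_) (fun _ _ => rfl)
  · simpa using ⟨ZMod.val_lt _, ZMod.val_coe_unit_coprime b⟩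
  · exact Units.ext (ZMod.val_injective n h)
  · obtain ⟨hkn, hk⟩ := mem_filter.mp hk
    refine ⟨ZMod.unitOfCoprime k hk, mem_univ _, ?_⟩
    rw [ZMod.coe_unitOfCoprime, ZMod.val_natCast, Nat.mod_eq_of_lt (mem_range.mp hkn)]

theorem sum_erase_zero_sum_range_eq_sum_units {ℓ : ℕ} [NeZero ℓ] (hℓ : ℓ.Prime) (f : ℕ → M) :
    ∑ j ∈ (range ℓ).erase 0, ∑ m ∈ range ℓ, f (j + ℓ * m) =
      ∑ b : (ZMod (ℓ ^ 2))ˣ, f (b : ZMod (ℓ ^ 2)).val := by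
  have hcop : ∀ k, k.Coprime (ℓ ^ 2) ↔ ¬ ℓ ∣ k := fun k => by
    rw [Nat.coprime_pow_right_iff two_pos, Nat.coprime_comm, hℓ.coprime_iff_not_dvd]
  have hdvd : ∀ j ∈ range ℓ, ∀ m, ℓ ∣ j + ℓ * m ↔ j = 0 := fun j hj m => by
    rw [Nat.dvd_add_left (dvd_mul_right ℓ m)]
    exact ⟨fun h => Nat.eq_zero_of_dvd_of_lt h (mem_range.mp hj), fun h => h ▸ dvd_zero ℓ⟩
  rw [ZMod.sum_units_eq_sum_coprime, sum_filter, ← filter_ne', sum_filter]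
  simp only [hcop]
  rw [sq, sum_range_mul_eq_sum_sum]
  refine sum_congr rfl fun j hj => ?_
  simp only [hdvd j hj]
  by_cases hj0 : j = 0 <;> simp [hj0]

end Reindexing

theorem pow_eq_pow_of_natCast_eq {G : Type*} [Monoid G] {x : G} {n a b : ℕ}
    (hx : orderOf x = n) (h : (a : ZMod n) = b) : x ^ a = x ^ b := by
  rw [← pow_mod_orderOf, ← pow_mod_orderOf x b, hx, (ZMod.natCast_eq_natCast_iff' a b n).mp h]

theorem orderOf_pow_of_orderOf_eq_sq {G : Type*} [Monoid G] {x : G} {ℓ : ℕ}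
    (hx : orderOf x = ℓ ^ 2) (hℓ : ℓ ≠ 0) : orderOf (x ^ ℓ) = ℓ := by
  rw [orderOf_pow_of_dvd hℓ (hx ▸ dvd_pow_self ℓ two_ne_zero), hx, sq,
    Nat.mul_div_cancel _ (Nat.pos_of_ne_zero hℓ)]

namespace MulChar

variable {F R : Type*} [Field F] [Fintype F] [CommRing R]

theorem exists_pow_orderOf_eq_of_apply_eq_one [IsDomain R] (ψ : MulChar F R) {u : F}
    (hu : u ≠ 0) (h : ψ u = 1) : ∃ v : F, v ^ orderOf ψ = u := by
  obtain ⟨g, hg⟩ := IsCyclic.exists_generator (α := Fˣ)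
  obtain ⟨k, hk⟩ := (Submonoid.mem_powers_iff _ _).mp
    (mem_powers_iff_mem_zpowers.mpr (hg (Units.mk0 u hu)))
  have hgk : (g : F) ^ k = u := by rw [← Units.val_pow_eq_pow_val, hk, Units.val_mk0]
  have hψk : ψ ^ k = 1 := by
    rw [MulChar.eq_iff hg, pow_apply_coe, one_apply_coe, ← map_pow, hgk, h]
  obtain ⟨m, rfl⟩ := orderOf_dvd_of_pow_eq_one hψk
  exact ⟨(g : F) ^ m, by rw [← pow_mul, mul_comm, hgk]⟩

theorem exists_isPrimitiveRoot_orderOf (ψ : MulChar F R) :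
    ∃ ζ : F, IsPrimitiveRoot ζ (orderOf ψ) := by
  classical
  obtain ⟨g, hg⟩ := IsCyclic.exists_generator (α := Fˣ)
  have hg' : IsPrimitiveRoot (g : F) (Fintype.card F - 1) := by
    rw [IsPrimitiveRoot.coe_units_iff, ← Fintype.card_units, ← Nat.card_eq_fintype_card,
      ← orderOf_eq_card_of_forall_mem_zpowers hg]
    exact IsPrimitiveRoot.orderOf g
  obtain ⟨d, hd⟩ := ψ.orderOf_dvd_card_sub_one
  exact ⟨_, hg'.pow (by have := Fintype.one_lt_card (α := F); omega) (hd.trans (mul_comm _ _))⟩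

variable [DecidableEq F] [IsDomain R]

theorem card_pow_eq {ψ : MulChar F R} {n : ℕ} (hψ : orderOf ψ = n) (u : F) :
    (#{y | y ^ n = u} : R) = (if u = 0 then 1 else 0) + ∑ j ∈ range n, (ψ ^ j) u := by
  subst hψ
  have hn := ψ.orderOf_pos
  rcases eq_or_ne u 0 with rfl | hu
  · have : ({y | y ^ orderOf ψ = 0} : Finset F) = {0} := by
      ext y; simp [pow_eq_zero_iff hn.ne']
    simp [this]
  obtain ⟨ζ, hζ⟩ := ψ.exists_isPrimitiveRoot_orderOf
  have hcard : #{y | y ^ orderOf ψ = u} = if ∃ v, v ^ orderOf ψ = u then orderOf ψ else 0 := by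
    convert hζ.card_nthRoots u
    rw [← Multiset.toFinset_card_of_nodup (hζ.nthRoots_nodup hu)]
    congr 1
    ext y
    simp [Polynomial.mem_nthRoots hn]
  have hsum : ∑ j ∈ range (orderOf ψ), (ψ ^ j) u = ∑ j ∈ range (orderOf ψ), ψ u ^ j :=
    sum_congr rfl fun j _ => pow_apply_coe ψ j (Units.mk0 u hu)
  rw [hcard, if_neg hu, zero_add, hsum]
  split_ifs with h
  · obtain ⟨v, rfl⟩ := h
    have hv : v ≠ 0 := by rintro rfl; exact hu (zero_pow hn.ne')
    rw [map_pow, ← pow_apply' ψ hn.ne', pow_orderOf_eq_one, one_apply (Ne.isUnit hv)]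
    simp
  · have hψu : ψ u ≠ 1 := fun h' => h (ψ.exists_pow_orderOf_eq_of_apply_eq_one hu h')
    have := geom_sum_mul (ψ u) (orderOf ψ)
    rw [← pow_apply' ψ hn.ne', pow_orderOf_eq_one, one_apply (Ne.isUnit hu), sub_self,
      mul_eq_zero, sub_eq_zero] at this
    rw [eq_comm]
    simpa [hψu] using this

theorem sum_comp_pow_eq {ψ : MulChar F R} {n : ℕ} (hψ : orderOf ψ = n) {g : F → R}
    (hg : g 0 = 0) : ∑ x, g (x ^ n) = ∑ m ∈ range n, ∑ t, (ψ ^ m) t * g t := by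
  calc ∑ x, g (x ^ n) = ∑ t, ∑ x with x ^ n = t, g (x ^ n) := (sum_fiberwise _ _ _).symm
    _ = ∑ t, (#{x | x ^ n = t} : R) * g t := by
      refine sum_congr rfl fun t _ => ?_
      rw [sum_congr rfl fun x hx => by rw [(mem_filter.mp hx).2], sum_const, nsmul_eq_mul]
    _ = ∑ t, ∑ m ∈ range n, (ψ ^ m) t * g t := by
      refine sum_congr rfl fun t _ => ?_
      rw [card_pow_eq hψ, add_mul, sum_mul]
      split_ifs with ht <;> simp [ht, hg]
    _ = _ := sum_comm

end MulChar

section Jacobi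

variable {F R : Type*} [Field F] [Fintype F] [CommRing R]

theorem sum_apply_mul_apply_sub_one_eq_jacobiSum {φ ψ ρ : MulChar F R} (h : φ * ψ * ρ = 1) :
    ∑ t, φ t * ψ (t - 1) = jacobiSum ρ ψ := by
  refine Fintype.sum_bijective (·⁻¹) inv_involutive.bijective _ _ fun t => ?_
  rcases eq_or_ne t 0 with rfl | ht
  · simp [MulChar.map_zero]
  have hφ : φ t = ρ t⁻¹ * ψ t⁻¹ := by
    calc φ t = φ t * (φ * ψ * ρ) t⁻¹ := by
          rw [h, MulChar.one_apply (Ne.isUnit (inv_ne_zero ht)), mul_one]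
      _ = φ (t * t⁻¹) * ψ t⁻¹ * ρ t⁻¹ := by simp only [MulChar.mul_apply, map_mul]; ring
      _ = ρ t⁻¹ * ψ t⁻¹ := by rw [mul_inv_cancel₀ ht, map_one, one_mul, mul_comm]
  rw [hφ, show 1 - t⁻¹ = t⁻¹ * (t - 1) by field_simp, map_mul, mul_assoc]

theorem sum_units_eq_sum_jacobiSum {ℓ : ℕ} [NeZero ℓ] {χ : MulChar F R}
    (hχ : orderOf χ = ℓ ^ 2) :
    ∑ b : (ZMod (ℓ ^ 2))ˣ, ∑ t, (χ ^ (b : ZMod (ℓ ^ 2)).val) t *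
        (χ ^ (ℓ * (b : ZMod (ℓ ^ 2)).val)) (t - 1) =
      ∑ a : (ZMod (ℓ ^ 2))ˣ,
        jacobiSum (χ ^ ((a : ZMod (ℓ ^ 2)).val * (ℓ * (ℓ - 1)))) (χ ^ (a : ZMod (ℓ ^ 2)).val) := by
  have hℓ2 : (ℓ : ZMod (ℓ ^ 2)) ^ 2 = 0 := by exact_mod_cast ZMod.natCast_self (ℓ ^ 2)
  have hℓ1 : ((ℓ - 1 : ℕ) : ZMod (ℓ ^ 2)) = ℓ - 1 := Nat.cast_pred (NeZero.pos ℓ)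
  let u : (ZMod (ℓ ^ 2))ˣ := (IsNilpotent.isUnit_sub_one ⟨2, hℓ2⟩).unit
  refine (Fintype.sum_equiv (Equiv.mulLeft u) _ _ fun a => ?_).symm
  have hua : ((u * a : (ZMod (ℓ ^ 2))ˣ) : ZMod (ℓ ^ 2)) = (ℓ - 1) * a := rfl
  rw [Equiv.coe_mulLeft,
    sum_apply_mul_apply_sub_one_eq_jacobiSum (ρ := χ ^ (a : ZMod (ℓ ^ 2)).val), jacobiSum_comm]
  · congr 1
    apply pow_eq_pow_of_natCast_eq hχ
    push_cast [ZMod.natCast_zmod_val, hua, hℓ1]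
    ring
  · rw [← pow_add, ← pow_add, ← pow_orderOf_eq_one χ, hχ]
    apply pow_eq_pow_of_natCast_eq hχ
    push_cast [ZMod.natCast_zmod_val, hua]
    linear_combination ((a : ZMod (ℓ ^ 2)) - 1) * hℓ2

end Jacobi

section Curve

variable {F R : Type*} [Field F] [Fintype F] [DecidableEq F] [CommRing R] [IsDomain R]
  {ℓ : ℕ} {χ : MulChar F R}

theorem sum_pow_apply_mul_pow_sub_one (hχ : orderOf χ = ℓ ^ 2) (j : ℕ) :
    ∑ x, (χ ^ (ℓ * j)) (x * (x ^ ℓ - 1)) =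
      ∑ m ∈ range ℓ, ∑ t, (χ ^ (j + ℓ * m)) t * (χ ^ (ℓ * (j + ℓ * m))) (t - 1) := by
  have hℓ : ℓ ≠ 0 := by rintro rfl; exact χ.orderOf_pos.ne' hχ
  calc ∑ x, (χ ^ (ℓ * j)) (x * (x ^ ℓ - 1))
      = ∑ x, (fun t => (χ ^ j) t * (χ ^ (ℓ * j)) (t - 1)) (x ^ ℓ) := by
        refine sum_congr rfl fun x _ => ?_
        dsimp only
        rw [map_mul, map_pow, ← MulChar.pow_apply' _ hℓ, ← pow_mul, mul_comm j]
    _ = ∑ m ∈ range ℓ, ∑ t, ((χ ^ ℓ) ^ m) t * ((χ ^ j) t * (χ ^ (ℓ * j)) (t - 1)) :=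
        MulChar.sum_comp_pow_eq (orderOf_pow_of_orderOf_eq_sq hχ hℓ)
          (g := fun t => (χ ^ j) t * (χ ^ (ℓ * j)) (t - 1)) (by simp [MulChar.map_zero])
    _ = _ := by
        refine sum_congr rfl fun m _ => sum_congr rfl fun t _ => ?_
        rw [← mul_assoc, ← MulChar.mul_apply, ← pow_mul, ← pow_add, add_comm]
        congr 2
        apply pow_eq_pow_of_natCast_eq hχ
        have hℓ2 : (ℓ : ZMod (ℓ ^ 2)) ^ 2 = 0 := by exact_mod_cast ZMod.natCast_self (ℓ ^ 2)
        push_cast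
        linear_combination (-(m : ZMod (ℓ ^ 2))) * hℓ2

theorem card_curve_eq [NeZero ℓ] (hℓ : ℓ.Prime) (hχ : orderOf χ = ℓ ^ 2) :
    (Fintype.card {p : F × F // p.2 ^ ℓ = p.1 * (p.1 ^ ℓ - 1)} : R) =
      Fintype.card F + ∑ b : (ZMod (ℓ ^ 2))ˣ, ∑ t, (χ ^ (b : ZMod (ℓ ^ 2)).val) t *
        (χ ^ (ℓ * (b : ZMod (ℓ ^ 2)).val)) (t - 1) := by
  have hfiber : (Fintype.card {p : F × F // p.2 ^ ℓ = p.1 * (p.1 ^ ℓ - 1)} : R) =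
      ∑ x : F, (#{y : F | y ^ ℓ = x * (x ^ ℓ - 1)} : R) := by
    rw [Fintype.card_subtype, card_filter, Fintype.sum_prod_type]
    push_cast [card_filter]
    congr!
  have hone : ∀ u : F, (if u = 0 then 1 else 0) + (1 : MulChar F R) u = 1 := fun u => by
    by_cases hu : u = 0
    · simp [hu, MulChar.map_zero]
    · simp [hu, MulChar.one_apply (isUnit_iff_ne_zero.mpr hu)]
  rw [hfiber]
  simp only [MulChar.card_pow_eq (orderOf_pow_of_orderOf_eq_sq hχ hℓ.ne_zero),
    ← add_sum_erase _ _ (mem_range.mpr hℓ.pos), pow_zero, ← add_assoc, hone, sum_add_distrib]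
  rw [sum_const, card_univ, nsmul_one, sum_comm, ← sum_erase_zero_sum_range_eq_sum_units hℓ
    (fun k => ∑ t, (χ ^ k) t * (χ ^ (ℓ * k)) (t - 1))]
  congr 1
  refine sum_congr rfl fun j _ => ?_
  rw [← pow_mul, sum_pow_apply_mul_pow_sub_one hχ]

end Curve

theorem stmt_6_general (ℓ : ℕ) [NeZero ℓ] (hℓ : ℓ.Prime)
    (F : Type*) [Field F] [Fintype F] [DecidableEq F]
    (χ : MulChar F ℂ) (hχ : orderOf χ = ℓ ^ 2) :
    (Fintype.card {p : F × F // p.2 ^ ℓ = p.1 * (p.1 ^ ℓ - 1)} + 1 : ℂ)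
      = (Fintype.card F : ℂ) + 1 +
        ∑ a : (ZMod (ℓ ^ 2))ˣ,
          ∑ x : F, (χ ^ ((a : ZMod (ℓ ^ 2)).val * (ℓ * (ℓ - 1)))) x
            * (χ ^ (a : ZMod (ℓ ^ 2)).val) (1 - x) := by
  rw [card_curve_eq hℓ hχ, sum_units_eq_sum_jacobiSum hχ]
  simp only [jacobiSum]
  ring

theorem stmt_6 (ℓ : ℕ) [NeZero ℓ] (hℓ : ℓ.Prime)
    (F : Type*) [Field F] [Fintype F] [DecidableEq F]
    (hdvd : ℓ ^ 2 ∣ Fintype.card F - 1)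
    (χ : MulChar F ℂ) (hχ : orderOf χ = ℓ ^ 2) :
    (Fintype.card {p : F × F // p.2 ^ ℓ = p.1 * (p.1 ^ ℓ - 1)} + 1 : ℂ)
      = (Fintype.card F : ℂ) + 1 +
        ∑ a : (ZMod (ℓ ^ 2))ˣ,
          ∑ x : F, (χ ^ ((a : ZMod (ℓ ^ 2)).val * (ℓ * (ℓ - 1)))) x
            * (χ ^ (a : ZMod (ℓ ^ 2)).val) (1 - x) :=
  stmt_6_general ℓ hℓ F χ hχ
end

section
/- Let ℓ ≥ 3 be prime and S = { ℓ(a+1-b) - b mod ℓ² : 0 ≤ a ≤ ℓ-2, a+1 ≤ b ≤ ℓ-1 }. Then S has exactly ℓ(ℓ-1)/2 elements, no two elements e, e' of S satisfy e + e' ≡ 0 (mod ℓ²), and S is contained in the units of ℤ/ℓ²ℤ; consequently (ℤ/ℓ²ℤ)^* is the disjoint union of S and {ℓ² - e : e ∈ S}. -/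
private lemma memS_iff (ℓ : ℕ) (h3 : 3 ≤ ℓ) (z : ZMod (ℓ ^ 2)) :
    (∃ a b : ℤ, 0 ≤ a ∧ a ≤ (ℓ : ℤ) - 2 ∧ a + 1 ≤ b ∧ b ≤ (ℓ : ℤ) - 1 ∧
      z = (((ℓ : ℤ) * (a + 1 - b) - b : ℤ) : ZMod (ℓ ^ 2))) ↔
    (∃ b s : ℕ, 1 ≤ b ∧ b < ℓ ∧ s < b ∧ z = -((b + ℓ * s : ℕ) : ZMod (ℓ ^ 2))) := by
  constructor
  · rintro ⟨a, b, ha0, ha2, hab, hb, hz⟩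
    refine ⟨b.toNat, (b - 1 - a).toNat, by omega, by omega, by omega, ?_⟩
    have e1 : ((b.toNat : ℤ)) = b := Int.toNat_of_nonneg (by omega)
    have e2 : (((b - 1 - a).toNat : ℤ)) = b - 1 - a := Int.toNat_of_nonneg (by omega)
    have key : ((ℓ : ℤ) * (a + 1 - b) - b) = -(((b.toNat + ℓ * (b - 1 - a).toNat : ℕ) : ℤ)) := by
      push_cast
      rw [e1, e2]; ring
    rw [hz, key]
    push_cast
    ring
  · rintro ⟨b, s, h1, h2, hs, hz⟩
    refine ⟨(b : ℤ) - 1 - s, (b : ℤ), by omega, by omega, by omega, by omega, ?_⟩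
    rw [hz]
    have key : ((ℓ : ℤ) * (((b : ℤ) - 1 - s) + 1 - b) - b) = -(((b + ℓ * s : ℕ) : ℤ)) := by
      push_cast; ring
    rw [key]
    push_cast
    ring

theorem stmt_11 (ℓ : ℕ) (hℓ : ℓ.Prime) (h3 : 3 ≤ ℓ)
    (S : Set (ZMod (ℓ ^ 2)))
    (hS : S = {z | ∃ a b : ℤ, 0 ≤ a ∧ a ≤ (ℓ : ℤ) - 2 ∧ a + 1 ≤ b ∧ b ≤ (ℓ : ℤ) - 1 ∧
      z = (((ℓ : ℤ) * (a + 1 - b) - b : ℤ) : ZMod (ℓ ^ 2))}) :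
    S.ncard = ℓ * (ℓ - 1) / 2 ∧
    (∀ e ∈ S, ∀ e' ∈ S, e + e' ≠ 0) ∧
    (∀ e ∈ S, IsUnit e) ∧
    (∀ z : ZMod (ℓ ^ 2), IsUnit z ↔ (z ∈ S ∨ -z ∈ S)) := by
  haveI : NeZero (ℓ ^ 2) := ⟨pow_ne_zero _ hℓ.ne_zero⟩
  have hmem : ∀ z : ZMod (ℓ ^ 2), z ∈ S ↔
      (∃ b s : ℕ, 1 ≤ b ∧ b < ℓ ∧ s < b ∧ z = -((b + ℓ * s : ℕ) : ZMod (ℓ ^ 2))) := by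
    intro z
    rw [hS]
    exact memS_iff ℓ h3 z
  -- basic bound
  have hrlt : ∀ b s : ℕ, 1 ≤ b → b < ℓ → s < b → b + ℓ * s < ℓ ^ 2 := by
    intro b s h1 h2 hs
    have : ℓ * s ≤ ℓ * (ℓ - 2) := Nat.mul_le_mul_left _ (by omega)
    have h2' : ℓ * (ℓ - 2) + 2 * ℓ = ℓ ^ 2 := by
      have : ℓ - 2 + 2 = ℓ := by omega
      nlinarith [this]
    omega
  -- injectivity of r ↦ -(r : ZMod ℓ²) on r < ℓ², and of (b,s) ↦ b + ℓ s
  have hinj : ∀ r₁ r₂ : ℕ, r₁ < ℓ ^ 2 → r₂ < ℓ ^ 2 →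
      (-((r₁ : ℕ) : ZMod (ℓ ^ 2)) = -((r₂ : ℕ) : ZMod (ℓ ^ 2))) → r₁ = r₂ := by
    intro r₁ r₂ hr₁ hr₂ h
    have h' : ((r₁ : ℕ) : ZMod (ℓ ^ 2)) = ((r₂ : ℕ) : ZMod (ℓ ^ 2)) := by
      have := congrArg Neg.neg h; simpa using this
    calc r₁ = ((r₁ : ZMod (ℓ ^ 2))).val := (ZMod.val_cast_of_lt hr₁).symm
      _ = ((r₂ : ZMod (ℓ ^ 2))).val := by rw [h']
      _ = r₂ := ZMod.val_cast_of_lt hr₂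
  have hbs : ∀ b s : ℕ, b < ℓ → (b + ℓ * s) % ℓ = b ∧ (b + ℓ * s) / ℓ = s := by
    intro b s hb
    constructor
    · rw [Nat.add_mul_mod_self_left, Nat.mod_eq_of_lt hb]
    · rw [Nat.add_mul_div_left _ _ (by omega : 0 < ℓ), Nat.div_eq_of_lt hb, Nat.zero_add]
  -- Part 3: units
  have hunit : ∀ e ∈ S, IsUnit e := by
    intro e he
    rw [hmem] at he
    obtain ⟨b, s, h1, h2, hs, he⟩ := he
    rw [he]
    apply IsUnit.neg
    rw [ZMod.isUnit_iff_coprime]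
    apply Nat.Coprime.pow_right
    rw [Nat.coprime_comm, hℓ.coprime_iff_not_dvd]
    intro hdvd
    have h0 : (b + ℓ * s) % ℓ = 0 := Nat.mod_eq_zero_of_dvd hdvd
    have := (hbs b s h2).1
    omega
  refine ⟨?_, ?_, hunit, ?_⟩
  -- Part 1: cardinality
  · classical
    set P : Finset ((_ : ℕ) × ℕ) := (Finset.Ico 1 ℓ).sigma (fun b => Finset.range b) with hP
    set g : ((_ : ℕ) × ℕ) → ZMod (ℓ ^ 2) := fun p => -((p.1 + ℓ * p.2 : ℕ) : ZMod (ℓ ^ 2)) with hg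
    have hSfin : S = ↑(P.image g) := by
      ext z
      rw [hmem z]
      simp only [Finset.coe_image, Set.mem_image, Finset.mem_coe, hP, Finset.mem_sigma,
        Finset.mem_Ico, Finset.mem_range, hg]
      constructor
      · rintro ⟨b, s, h1, h2, hs, hz⟩
        exact ⟨⟨b, s⟩, ⟨⟨h1, h2⟩, hs⟩, hz.symm⟩
      · rintro ⟨⟨b, s⟩, ⟨⟨h1, h2⟩, hs⟩, hz⟩
        exact ⟨b, s, h1, h2, hs, hz.symm⟩
    rw [hSfin, Set.ncard_coe_finset]
    have hcard : (P.image g).card = P.card := by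
      apply Finset.card_image_of_injOn
      rintro ⟨b, s⟩ hp ⟨b', s'⟩ hq hgeq
      simp only [hP, Finset.mem_sigma, Finset.mem_Ico, Finset.mem_range, Finset.mem_coe] at hp hq
      have hr := hinj (b + ℓ * s) (b' + ℓ * s')
        (hrlt b s hp.1.1 hp.1.2 hp.2) (hrlt b' s' hq.1.1 hq.1.2 hq.2) hgeq
      have e1 := (hbs b s hp.1.2).1
      have e2 := (hbs b' s' hq.1.2).1
      have e3 := (hbs b s hp.1.2).2
      have e4 := (hbs b' s' hq.1.2).2
      have hb : b = b' := by rw [← e1, ← e2, hr]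
      have hss : s = s' := by rw [← e3, ← e4, hr]
      subst hb; subst hss; rfl
    rw [hcard, hP, Finset.card_sigma]
    simp only [Finset.card_range]
    have hgauss : (∑ b ∈ Finset.range ℓ, b) * 2 = ℓ * (ℓ - 1) := Finset.sum_range_id_mul_two ℓ
    have hico : ∑ b ∈ Finset.Ico 1 ℓ, b = ∑ b ∈ Finset.range ℓ, b := by
      rw [Finset.range_eq_Ico,
        ← Finset.sum_Ico_consecutive _ (by omega : 0 ≤ 1) (by omega : 1 ≤ ℓ)]
      simp
    omega
  -- Part 2: no two sum to zero
  · intro e he e' he' hcontra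
    rw [hmem] at he he'
    obtain ⟨b, s, h1, h2, hs, he⟩ := he
    obtain ⟨b', s', h1', h2', hs', he'⟩ := he'
    rw [he, he'] at hcontra
    have hsum : (((b + ℓ * s) + (b' + ℓ * s') : ℕ) : ZMod (ℓ ^ 2)) = 0 := by
      push_cast
      push_cast at hcontra
      linear_combination -hcontra
    rw [ZMod.natCast_eq_zero_iff] at hsum
    obtain ⟨k, hk⟩ := hsum
    have hlt1 := hrlt b s h1 h2 hs
    have hlt2 := hrlt b' s' h1' h2' hs'
    have hk1 : k = 1 := by nlinarith [sq_nonneg ℓ, pow_pos (show 0 < ℓ by omega) 2]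
    rw [hk1, mul_one, pow_two] at hk
    -- now (b + b') + ℓ * (s + s') = ℓ * ℓ
    have hdvd : ℓ ∣ b + b' := by
      have hd1 : ℓ ∣ (b + ℓ * s) + (b' + ℓ * s') := hk ▸ ⟨ℓ, rfl⟩
      have hd2 : ℓ ∣ ℓ * s + ℓ * s' := ⟨s + s', by ring⟩
      have hd3 := Nat.dvd_sub hd1 hd2
      have hd4 : (b + ℓ * s) + (b' + ℓ * s') - (ℓ * s + ℓ * s') = b + b' := by omega
      rwa [hd4] at hd3
    obtain ⟨c, hc⟩ := hdvd
    have hc1 : c = 1 := by nlinarith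
    rw [hc1, mul_one] at hc
    -- b + b' = ℓ, so ℓ * (s + s' + 1) = ℓ * ℓ
    have hss : s + s' + 1 = ℓ := by
      have hexp : ℓ * (s + s' + 1) = ℓ * s + ℓ * s' + ℓ := by ring
      have : ℓ * (s + s' + 1) = ℓ * ℓ := by omega
      exact Nat.eq_of_mul_eq_mul_left (by omega) this
    omega
  -- Part 4
  · intro z
    constructor
    · intro hz
      set r : ℕ := (-z).val with hr
      have hrz : ((r : ℕ) : ZMod (ℓ ^ 2)) = -z := ZMod.natCast_zmod_val (-z)
      have hzr : z = -((r : ℕ) : ZMod (ℓ ^ 2)) := by rw [hrz]; ring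
      have hrlt2 : r < ℓ ^ 2 := ZMod.val_lt (-z)
      have hcop : Nat.Coprime r (ℓ ^ 2) := by
        rw [← ZMod.isUnit_iff_coprime, hrz]
        exact hz.neg
      have hndvd : ¬ ℓ ∣ r := by
        intro hdvd
        have : ℓ ∣ Nat.gcd r (ℓ ^ 2) := Nat.dvd_gcd hdvd (dvd_pow_self ℓ (by omega))
        rw [hcop] at this
        exact absurd (Nat.le_of_dvd one_pos this) (by omega)
      set b : ℕ := r % ℓ with hb
      set s : ℕ := r / ℓ with hsdef
      have hbr : b + ℓ * s = r := Nat.mod_add_div r ℓ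
      have hb1 : 1 ≤ b := by
        rcases Nat.eq_zero_or_pos b with h | h
        · exact absurd ((Nat.dvd_iff_mod_eq_zero.2 (by omega))) hndvd
        · exact h
      have hb2 : b < ℓ := Nat.mod_lt _ (by omega)
      have hsl : s < ℓ := by
        rw [hsdef]
        apply Nat.div_lt_of_lt_mul
        rw [← pow_two]
        exact hrlt2
      by_cases hcase : s < b
      · left
        rw [hmem]
        exact ⟨b, s, hb1, hb2, hcase, by rw [hbr, ← hzr]⟩
      · right
        rw [hmem]
        push_neg at hcase
        refine ⟨ℓ - b, ℓ - 1 - s, by omega, by omega, by omega, ?_⟩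
        have hr' : (ℓ - b) + ℓ * (ℓ - 1 - s) = ℓ ^ 2 - r := by
          zify [show b ≤ ℓ by omega, show s ≤ ℓ - 1 by omega, show r ≤ ℓ ^ 2 by omega,
            show (1 : ℕ) ≤ ℓ by omega]
          have : (r : ℤ) = b + ℓ * s := by exact_mod_cast hbr.symm
          rw [this]
          push_cast
          ring
        rw [hr']
        have : ((ℓ ^ 2 - r : ℕ) : ZMod (ℓ ^ 2)) = -((r : ℕ) : ZMod (ℓ ^ 2)) := by
          rw [Nat.cast_sub (le_of_lt hrlt2)]
          simp [ZMod.natCast_self]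
        rw [this, hrz]
        ring
    · rintro (hz | hz)
      · exact hunit z hz
      · have := hunit (-z) hz
        simpa using this.neg
end
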